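/- (Optimality Lemma) Let G be a finitely generated group such that for all x, y ∈ G, y⁻¹xy = x⁻¹ implies x = x⁻¹, and assume G is non-abelian or of exponent 2. Let 𝒮 be a family of finite symmetric generating systems of G with Property (★). Then for any λ, ε ≥ 0, every map φ: G → G which (together with some φ': G → G) is a (λ,ε)-quasi-isometry of (G, d_S) for every S ∈ 𝒮 satisfies φ(x) = φ(e)·x for all x ∈ G. Consequently the 𝒮-uniform quasi-isometries of G are exactly the left translations, and form a group isomorphic to G. -/
import Mathlib


/-! Common definitions: word metrics, quasi-isometries, rough isometries. -/

/-- `g` is a product of `n` elements of `S ∪ S⁻¹`. -/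
def IsWordProd {G : Type*} [Group G] (S : Set G) (g : G) (n : ℕ) : Prop :=
  ∃ l : List G, l.length = n ∧ (∀ s ∈ l, s ∈ S ∪ S⁻¹) ∧ l.prod = g

/-- The word metric associated to a generating system `S`: the least `n` such that
`x⁻¹ * y` is a product of `n` elements of `S ∪ S⁻¹`. -/
noncomputable def wdist {G : Type*} [Group G] (S : Set G) (x y : G) : ℕ :=
  sInf {n | IsWordProd S (x⁻¹ * y) n}

/-- The word norm `‖g‖_S = d_S(e, g)`. -/
noncomputable def wnorm {G : Type*} [Group G] (S : Set G) (g : G) : ℕ :=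
  wdist S 1 g

/-- `(η, η')` is a `(lam, eps)`-quasi-isometry between `(X, dX)` and `(Y, dY)`. -/
def IsQIPair {X Y : Type*} (dX : X → X → ℝ) (dY : Y → Y → ℝ)
    (η : X → Y) (η' : Y → X) (lam eps : ℝ) : Prop :=
  (∀ x x' : X, lam⁻¹ * dX x x' - eps ≤ dY (η x) (η x') ∧
      dY (η x) (η x') ≤ lam * dX x x' + eps) ∧
  (∀ y y' : Y, lam⁻¹ * dY y y' - eps ≤ dX (η' y) (η' y') ∧
      dX (η' y) (η' y') ≤ lam * dY y y' + eps) ∧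
  (∀ y : Y, dY (η (η' y)) y ≤ eps) ∧
  (∀ x : X, dX (η' (η x)) x ≤ eps)

/-- `(η, η')` is an `eps`-isometry between `(X, dX)` and `(Y, dY)`. -/
def IsEpsIsomPair {X Y : Type*} (dX : X → X → ℝ) (dY : Y → Y → ℝ)
    (η : X → Y) (η' : Y → X) (eps : ℝ) : Prop :=
  (∀ x x' : X, |dX x x' - dY (η x) (η x')| ≤ eps) ∧
  (∀ y y' : Y, |dY y y' - dX (η' y) (η' y')| ≤ eps) ∧
  (∀ y : Y, dY (η (η' y)) y ≤ eps) ∧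
  (∀ x : X, dX (η' (η x)) x ≤ eps)

/-- The real-valued word metric. -/
noncomputable def wdistR {G : Type*} [Group G] (S : Set G) (x y : G) : ℝ :=
  (wdist S x y : ℝ)

/-- Property (★): for all `g ≠ h`, `g ≠ h⁻¹` and every positive `R` there is `S ∈ 𝒮`
containing one of `g`, `h` while the other has word norm at least `R`. -/
def PropertyStar {G : Type*} [Group G] (𝒮 : Set (Set G)) : Prop :=
  ∀ g h : G, g ≠ h → g ≠ h⁻¹ → ∀ R : ℕ, 0 < R →
    ∃ S ∈ 𝒮, (g ∈ S ∧ R ≤ wnorm S h) ∨ (h ∈ S ∧ R ≤ wnorm S g)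

/-- `φ` is an `𝒮`-uniform quasi-isometry of `G`: for some fixed `λ, ε ≥ 0` and some
`φ'`, the pair `(φ, φ')` is a `(λ, ε)`-quasi-isometry of `(G, d_S)` for every `S ∈ 𝒮`. -/
def UniformQI {G : Type*} [Group G] (𝒮 : Set (Set G)) (φ : G → G) : Prop :=
  ∃ lam eps : ℝ, 0 ≤ lam ∧ 0 ≤ eps ∧ ∃ φ' : G → G,
    ∀ S ∈ 𝒮, IsQIPair (wdistR S) (wdistR S) φ φ' lam eps

section Helpers

variable {G : Type*} [Group G] {S : Set G}

lemma IsWordProd.inv {g : G} {n : ℕ} (h : IsWordProd S g n) : IsWordProd S g⁻¹ n := by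
  obtain ⟨l, hl, hmem, hprod⟩ := h
  refine ⟨(l.map fun x => x⁻¹).reverse, by simp [hl], ?_, ?_⟩
  · intro s hs
    simp only [List.mem_reverse, List.mem_map] at hs
    obtain ⟨a, ha, rfl⟩ := hs
    rcases hmem a ha with h | h
    · exact Or.inr (by simpa using h)
    · exact Or.inl (by simpa using h)
  · rw [← List.prod_inv_reverse, hprod]

lemma IsWordProd.mul {g h : G} {m n : ℕ} (hg : IsWordProd S g m)
    (hh : IsWordProd S h n) : IsWordProd S (g * h) (m + n) := by
  obtain ⟨l1, hl1, hm1, hp1⟩ := hg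
  obtain ⟨l2, hl2, hm2, hp2⟩ := hh
  refine ⟨l1 ++ l2, by simp [hl1, hl2], ?_, by simp [hp1, hp2]⟩
  intro s hs
  rcases List.mem_append.mp hs with h | h
  exacts [hm1 s h, hm2 s h]

lemma isWordProd_one : IsWordProd S (1 : G) 0 := ⟨[], rfl, by simp, rfl⟩

lemma isWordProd_mem {g : G} (hg : g ∈ S) : IsWordProd S g 1 := by
  refine ⟨[g], rfl, ?_, by simp⟩
  intro s hs
  simp only [List.mem_singleton] at hs
  subst hs
  exact Or.inl hg

lemma exists_isWordProd (hS : Subgroup.closure S = ⊤) (g : G) :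
    ∃ n, IsWordProd S g n := by
  have hg : g ∈ Subgroup.closure S := hS ▸ Subgroup.mem_top g
  induction hg using Subgroup.closure_induction with
  | mem x hx => exact ⟨1, isWordProd_mem hx⟩
  | one => exact ⟨0, isWordProd_one⟩
  | mul x y _ _ hx hy =>
      obtain ⟨m, hm⟩ := hx
      obtain ⟨n, hn⟩ := hy
      exact ⟨m + n, hm.mul hn⟩
  | inv x _ hx =>
      obtain ⟨m, hm⟩ := hx
      exact ⟨m, hm.inv⟩

lemma wnorm_def (g : G) : wnorm S g = sInf {n | IsWordProd S g n} := by
  simp [wnorm, wdist]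

lemma wdist_eq_wnorm (x y : G) : wdist S x y = wnorm S (x⁻¹ * y) := by
  simp [wnorm, wdist]

lemma wnorm_le {g : G} {n : ℕ} (h : IsWordProd S g n) : wnorm S g ≤ n := by
  rw [wnorm_def]; exact Nat.sInf_le h

lemma isWordProd_wnorm (hS : Subgroup.closure S = ⊤) (g : G) :
    IsWordProd S g (wnorm S g) := by
  rw [wnorm_def]
  exact Nat.sInf_mem (exists_isWordProd hS g)

lemma wnorm_one : wnorm S (1 : G) = 0 :=
  Nat.le_zero.mp (wnorm_le isWordProd_one)

lemma wdist_self (x : G) : wdist S x x = 0 := by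
  rw [wdist_eq_wnorm, inv_mul_cancel, wnorm_one]

lemma wnorm_mul_le (hS : Subgroup.closure S = ⊤) (g h : G) :
    wnorm S (g * h) ≤ wnorm S g + wnorm S h :=
  wnorm_le ((isWordProd_wnorm hS g).mul (isWordProd_wnorm hS h))

lemma wdist_triangle (hS : Subgroup.closure S = ⊤) (x y z : G) :
    wdist S x z ≤ wdist S x y + wdist S y z := by
  rw [wdist_eq_wnorm, wdist_eq_wnorm, wdist_eq_wnorm]
  have : x⁻¹ * z = (x⁻¹ * y) * (y⁻¹ * z) := by group
  rw [this]
  exact wnorm_mul_le hS _ _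

lemma wnorm_inv_eq (g : G) : wnorm S g⁻¹ = wnorm S g := by
  have h1 : {n | IsWordProd S g⁻¹ n} = {n | IsWordProd S g n} := by
    ext n
    constructor
    · intro h; simpa using h.inv
    · intro h; exact h.inv
  rw [wnorm_def, wnorm_def, h1]

lemma wdist_symm (x y : G) : wdist S x y = wdist S y x := by
  rw [wdist_eq_wnorm, wdist_eq_wnorm, ← wnorm_inv_eq]
  congr 1
  group

lemma wnorm_le_one {g : G} (hg : g ∈ S) : wnorm S g ≤ 1 :=
  wnorm_le (isWordProd_mem hg)

end Helpers

/-- **Optimality Lemma.** Let `G` be finitely generated with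
`x^y = x⁻¹ ⟹ x = x⁻¹`, non-abelian or of exponent 2, and let `𝒮` be a family of finite
symmetric generating systems with Property (★). Then every map `φ` which together with
some `φ'` is a `(λ, ε)`-quasi-isometry for every `S ∈ 𝒮` satisfies `φ(x) = φ(e)·x`;
consequently the `𝒮`-uniform quasi-isometries are exactly the left translations. -/


theorem optimality_lemma {G : Type*} [Group G] [Group.FG G]
    (hconj : ∀ x y : G, y⁻¹ * x * y = x⁻¹ → x = x⁻¹)
    (hG : (¬ ∀ a b : G, a * b = b * a) ∨ ∀ x : G, x * x = 1)
    (𝒮 : Set (Set G))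
    (h𝒮 : ∀ S ∈ 𝒮, S.Finite ∧ S⁻¹ = S ∧ Subgroup.closure S = ⊤)
    (hstar : PropertyStar 𝒮) :
    (∀ lam eps : ℝ, 0 ≤ lam → 0 ≤ eps → ∀ φ φ' : G → G,
      (∀ S ∈ 𝒮, IsQIPair (wdistR S) (wdistR S) φ φ' lam eps) →
      ∀ x : G, φ x = φ 1 * x) ∧
    ∀ φ : G → G, UniformQI 𝒮 φ ↔ ∃ c : G, ∀ x : G, φ x = c * x := by
  -- the main statement: uniform QIs fix left-translation structure
  have main : ∀ lam eps : ℝ, 0 ≤ lam → 0 ≤ eps → ∀ φ φ' : G → G,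
      (∀ S ∈ 𝒮, IsQIPair (wdistR S) (wdistR S) φ φ' lam eps) →
      ∀ x : G, φ x = φ 1 * x := by
    intro lam eps hlam heps φ φ' hQI
    -- Key relation from Property (★)
    have key : ∀ x y : G, (φ x)⁻¹ * φ y = x⁻¹ * y ∨ (φ x)⁻¹ * φ y = y⁻¹ * x := by
      intro x y
      by_contra hcon
      push_neg at hcon
      obtain ⟨h1, h2⟩ := hcon
      set g : G := x⁻¹ * y with hgdef
      set h : G := (φ x)⁻¹ * φ y with hhdef
      have hgh : g ≠ h := fun e => h1 e.symm
      have hgh' : g ≠ h⁻¹ := by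
        intro e
        apply h2
        rw [show h = g⁻¹ by rw [e, inv_inv], hgdef, mul_inv_rev, inv_inv]
      set R : ℕ := ⌈lam + 3 * eps⌉₊ + 1 with hRdef
      obtain ⟨S, hS, hcase⟩ := hstar g h hgh hgh' R (Nat.succ_pos _)
      obtain ⟨hfin, hsymm, hgen⟩ := h𝒮 S hS
      obtain ⟨hQ1, hQ2, hQ3, hQ4⟩ := hQI S hS
      have hRgt : lam + 3 * eps < (R : ℝ) := by
        have := Nat.le_ceil (lam + 3 * eps)
        push_cast [hRdef]
        linarith
      have hdxy : wdist S x y = wnorm S g := wdist_eq_wnorm x y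
      have hdfxy : wdist S (φ x) (φ y) = wnorm S h := wdist_eq_wnorm (φ x) (φ y)
      rcases hcase with ⟨hgS, hR⟩ | ⟨hhS, hR⟩
      · -- g ∈ S, R ≤ ‖h‖
        have hg1 : wnorm S g ≤ 1 := wnorm_le_one hgS
        have hub := (hQ1 x y).2
        rw [wdistR, wdistR, hdxy, hdfxy] at hub
        have hRle : (R : ℝ) ≤ (wnorm S h : ℝ) := by exact_mod_cast hR
        have hgle : (wnorm S g : ℝ) ≤ 1 := by exact_mod_cast hg1
        nlinarith
      · -- h ∈ S, R ≤ ‖g‖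
        have hh1 : wnorm S h ≤ 1 := wnorm_le_one hhS
        have htri : wdist S x y ≤
            wdist S x (φ' (φ x)) + wdist S (φ' (φ x)) (φ' (φ y)) +
              wdist S (φ' (φ y)) y :=
          le_trans (wdist_triangle hgen x (φ' (φ y)) y)
            (by
              have := wdist_triangle hgen x (φ' (φ x)) (φ' (φ y))
              omega)
        have e1 : wdistR S x (φ' (φ x)) ≤ eps := by
          rw [wdistR, wdist_symm]
          exact hQ4 x
        have e2 : wdistR S (φ' (φ y)) y ≤ eps := hQ4 y
        have e3 : wdistR S (φ' (φ x)) (φ' (φ y)) ≤ lam * wdistR S (φ x) (φ y) + eps :=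
          (hQ2 (φ x) (φ y)).2
        have hRle : (R : ℝ) ≤ (wnorm S g : ℝ) := by exact_mod_cast hR
        have hhle : (wnorm S h : ℝ) ≤ 1 := by exact_mod_cast hh1
        simp only [wdistR] at e1 e2 e3
        rw [hdfxy] at e3
        have htriR : (wnorm S g : ℝ) ≤
            (wdist S x (φ' (φ x)) : ℝ) + (wdist S (φ' (φ x)) (φ' (φ y)) : ℝ) +
              (wdist S (φ' (φ y)) y : ℝ) := by
          rw [← hdxy]
          exact_mod_cast htri
        nlinarith
    -- now pure algebra
    have hψ1 : (φ 1)⁻¹ * φ 1 = 1 := inv_mul_cancel _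
    have P : ∀ y : G, (φ 1)⁻¹ * φ y = y ∨ (φ 1)⁻¹ * φ y = y⁻¹ := by
      intro y
      rcases key 1 y with h | h
      · left; rw [h]; group
      · right; rw [h]; group
    -- suffices : ∀ x, (φ 1)⁻¹ * φ x = x
    suffices hid : ∀ x : G, (φ 1)⁻¹ * φ x = x by
      intro x
      have := hid x
      calc φ x = φ 1 * ((φ 1)⁻¹ * φ x) := by group
        _ = φ 1 * x := by rw [this]
    by_contra hcon
    push_neg at hcon
    obtain ⟨a, ha⟩ := hcon
    have haa : (φ 1)⁻¹ * φ a = a⁻¹ := (P a).resolve_left ha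
    have hane : a ≠ a⁻¹ := fun e => ha (by rw [haa, ← e])
    -- Step A : ψ is inversion
    have stepA : ∀ y : G, (φ 1)⁻¹ * φ y = y⁻¹ := by
      intro y
      rcases P y with h | h
      · -- ψ y = y; show y = y⁻¹
        have hk : (φ a)⁻¹ * φ y = a⁻¹ * y ∨ (φ a)⁻¹ * φ y = y⁻¹ * a := key a y
        have hval : (φ a)⁻¹ * φ y = a * y := by
          have : φ a = φ 1 * a⁻¹ := by
            calc φ a = φ 1 * ((φ 1)⁻¹ * φ a) := by group
              _ = φ 1 * a⁻¹ := by rw [haa]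
          have hy : φ y = φ 1 * y := by
            calc φ y = φ 1 * ((φ 1)⁻¹ * φ y) := by group
              _ = φ 1 * y := by rw [h]
          rw [this, hy]; group
        rw [hval] at hk
        rcases hk with hk | hk
        · exact absurd (mul_right_cancel hk) hane
        · -- a * y = y⁻¹ * a, so (a⁻¹)⁻¹ * y * a⁻¹ = y⁻¹
          have : (a⁻¹)⁻¹ * y * a⁻¹ = y⁻¹ := by
            rw [inv_inv]
            calc a * y * a⁻¹ = y⁻¹ * a * a⁻¹ := by rw [hk]
              _ = y⁻¹ := by group
          have := hconj y a⁻¹ this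
          rw [h]; exact this
      · exact h
    -- Step B : a is central
    have stepB : ∀ x : G, a * x = x * a := by
      intro x
      have hk := key x (a * x)
      have hval : (φ x)⁻¹ * φ (a * x) = a⁻¹ := by
        have hx : φ x = φ 1 * x⁻¹ := by
          calc φ x = φ 1 * ((φ 1)⁻¹ * φ x) := by group
            _ = φ 1 * x⁻¹ := by rw [stepA x]
        have hax : φ (a * x) = φ 1 * (a * x)⁻¹ := by
          calc φ (a * x) = φ 1 * ((φ 1)⁻¹ * φ (a * x)) := by group
            _ = φ 1 * (a * x)⁻¹ := by rw [stepA (a * x)]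
        rw [hx, hax]; group
      rw [hval] at hk
      rcases hk with hk | hk
      · -- a⁻¹ = x⁻¹ * (a * x)
        exfalso
        apply hane
        apply hconj a x
        rw [show x⁻¹ * a * x = x⁻¹ * (a * x) by group, ← hk]
      · -- a⁻¹ = (a*x)⁻¹ * x = x⁻¹ a⁻¹ x
        have : x * a⁻¹ = a⁻¹ * x := by
          have : x * a⁻¹ = x * ((a * x)⁻¹ * x) := by rw [← hk]
          rw [this]; group
        have h2 : a⁻¹ * x = x * a⁻¹ := this.symm
        calc a * x = a * (x * a⁻¹) * a := by group
          _ = a * (a⁻¹ * x) * a := by rw [h2]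
          _ = x * a := by group
    -- Step C : contradiction
    rcases hG with hna | hexp
    · push_neg at hna
      obtain ⟨b, c, hbc⟩ := hna
      -- relation: ∀ x y, x * y⁻¹ ∈ {x⁻¹ y, y⁻¹ x}
      have rel : ∀ x y : G, x * y⁻¹ = x⁻¹ * y ∨ x * y⁻¹ = y⁻¹ * x := by
        intro x y
        have hval : (φ x)⁻¹ * φ y = x * y⁻¹ := by
          have hx : φ x = φ 1 * x⁻¹ := by
            calc φ x = φ 1 * ((φ 1)⁻¹ * φ x) := by group
              _ = φ 1 * x⁻¹ := by rw [stepA x]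
          have hy : φ y = φ 1 * y⁻¹ := by
            calc φ y = φ 1 * ((φ 1)⁻¹ * φ y) := by group
              _ = φ 1 * y⁻¹ := by rw [stepA y]
          rw [hx, hy]; group
        have := key x y
        rw [hval] at this
        exact this
      -- first: b*c = b⁻¹ * c⁻¹
      have E1 : b * c = b⁻¹ * c⁻¹ := by
        rcases rel b c⁻¹ with h | h
        · rw [inv_inv] at h; exact h
        · rw [inv_inv] at h; exact absurd h hbc
      -- second: b * c * a = b⁻¹ * (a⁻¹ * c⁻¹)  or  = (a⁻¹*c⁻¹)⁻¹ * b
      have E2 := rel b (a⁻¹ * c⁻¹)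
      have hac : (a⁻¹ * c⁻¹)⁻¹ = c * a := by group
      rw [hac] at E2
      rcases E2 with h | h
      · -- b * (c * a) = b⁻¹ * (a⁻¹ * c⁻¹)
        apply hane
        have hstep : b * (c * a) = b⁻¹ * c⁻¹ * a⁻¹ := by
          rw [h]
          have := stepB c⁻¹
          calc b⁻¹ * (a⁻¹ * c⁻¹) = b⁻¹ * (c⁻¹ * a⁻¹) := by
                congr 1
                calc a⁻¹ * c⁻¹ = (c * a)⁻¹ := by group
                  _ = (a * c)⁻¹ := by rw [stepB c]
                  _ = c⁻¹ * a⁻¹ := by group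
            _ = b⁻¹ * c⁻¹ * a⁻¹ := by group
        rw [← E1] at hstep
        -- b * c * a = b * c * a⁻¹
        have : b * c * a = b * c * a⁻¹ := by
          rw [← hstep]; group
        exact mul_left_cancel (mul_left_cancel (by rw [← mul_assoc, this, mul_assoc]))
      · -- b * (c * a) = c * a * b
        exfalso
        apply hbc
        have hba := stepB b
        have : b * c * a = c * b * a := by
          calc b * c * a = b * (c * a) := by group
            _ = c * a * b := h
            _ = c * (a * b) := by group
            _ = c * (b * a) := by rw [← hba]
            _ = c * b * a := by group
        exact mul_right_cancel this
    · exact absurd (eq_inv_of_mul_eq_one_left (hexp a)) hane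
  refine ⟨main, fun φ => ⟨?_, ?_⟩⟩
  · rintro ⟨lam, eps, hlam, heps, φ', hQI⟩
    exact ⟨φ 1, main lam eps hlam heps φ φ' hQI⟩
  · rintro ⟨c, hc⟩
    refine ⟨1, 0, zero_le_one, le_refl 0, fun y => c⁻¹ * y, fun S hS => ?_⟩
    have hinv : ∀ (d x y : G), wdist S (d * x) (d * y) = wdist S x y := by
      intro d x y
      simp [wdist, mul_assoc]
    have hli : ∀ x y : G, wdistR S (φ x) (φ y) = wdistR S x y := by
      intro x y
      rw [hc, hc, wdistR, wdistR, hinv]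
    have hli' : ∀ x y : G, wdistR S (c⁻¹ * x) (c⁻¹ * y) = wdistR S x y := by
      intro x y
      rw [wdistR, wdistR, hinv]
    have hself : ∀ x : G, wdistR S x x = 0 := by
      intro x
      rw [wdistR, wdist_self]
      norm_num
    refine ⟨fun x x' => ?_, fun y y' => ?_, fun y => ?_, fun x => ?_⟩
    · rw [hli]; constructor <;> simp
    · rw [hli']; constructor <;> simp
    · show wdistR S (φ (c⁻¹ * y)) y ≤ 0
      rw [hc, show c * (c⁻¹ * y) = y from by group]
      exact le_of_eq (hself y)
    · show wdistR S (c⁻¹ * φ x) x ≤ 0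
      rw [hc, show c⁻¹ * (c * x) = x from by group]
      exact le_of_eq (hself x)
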